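/- Let p be an odd prime and M, A, R be unitaries with M^p = A^p = R^p = I, MA = ω^φ AM (φ ≠ 0), MR = ω^α RM, and AR = ω^β RA. If V = (ω^a/√p) Σ_{k=0}^{p−1} ω^{−k(σ−a)} M^k A^{−k−1}, then V R V† = ω^{φ^{−1}(α−β)(a−σ) − β} · R · A^{−φ^{−1}(α−β)} · M^{φ^{−1}(α−β)}, where φ^{−1} is the inverse of φ in F_p. In particular, V maps products of M, A, R (Pauli operators) to such products up to a pth root of unity phase. -/

import Mathlib

open Matrix

/-- The `p`-th root of unity `ω = e^{2πi/p}`. -/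
noncomputable def omega (p : ℕ) : ℂ := Complex.exp (2 * Real.pi * Complex.I / p)

/-- The operator `V = (ω^a/√p) Σ_{k=0}^{p−1} ω^{−k(σ−a)} M^k A^{−k−1}`,
where `A⁻¹ = A† = star A` for a unitary `A`. -/
noncomputable def Vop (p d : ℕ) (M A : Matrix (Fin d) (Fin d) ℂ) (σ a : ZMod p) :
    Matrix (Fin d) (Fin d) ℂ :=
  (omega p ^ a.val / (Real.sqrt p : ℂ)) •
    ∑ k ∈ Finset.range p,
      omega p ^ ((-(k : ZMod p) * (σ - a)).val) • (M ^ k * (star A) ^ (k + 1))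

/-!
With `𝕖 = ZMod.stdAddChar`, `V = (𝕖 a / √p) ∑ₓ 𝕖(-x(σ - a)) Mˣ A^{-(x+1)}` and `V†` is the
analogous sum of the `A^{y+1} M^{-y}`. Moving `R` to the front of `Mˣ A^{-(x+1)} R A^{y+1} M^{-y}`
and reordering the rest gives a phase times `R A^{-l} Mˡ` with `l = x - y`, and the total phase
of the `(x, y)` term is `𝕖(l(a - σ) - β) · 𝕖(x(α - β - φl))`. Summing over `x` by orthogonality
of characters kills every `l` except `l = φ⁻¹(α - β)`, which contributes a factor `p` that
cancels the normalisation `1/p`.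
-/

open Finset ZMod

local notation "𝕖" => ZMod.stdAddChar

lemma omega_pow_val {p : ℕ} [NeZero p] (t : ZMod p) : omega p ^ t.val = 𝕖 t := by
  rw [omega, ← Complex.exp_nat_mul, stdAddChar_apply, toCircle_apply]
  congr 1
  ring

lemma sum_range_natCast_eq_sum_zmod {p : ℕ} {E : Type*} [AddCommMonoid E] [NeZero p]
    (f : ZMod p → E) : ∑ k ∈ range p, f k = ∑ x : ZMod p, f x := by
  refine sum_nbij' (fun k => (k : ZMod p)) val (fun _ _ => mem_univ _)
    (fun x _ => mem_range.2 x.val_lt) (fun k hk => val_natCast_of_lt (mem_range.1 hk))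
    (fun x _ => natCast_zmod_val x) (fun _ _ => rfl)

section Powers

variable {p : ℕ} {G : Type*} [Monoid G] {x : G}

lemma pow_natCast_val (hx : x ^ p = 1) (n : ℕ) : x ^ (n : ZMod p).val = x ^ n := by
  rw [val_natCast, ← pow_eq_pow_mod n hx]

lemma pow_val_add [NeZero p] (hx : x ^ p = 1) (s t : ZMod p) :
    x ^ (s + t).val = x ^ s.val * x ^ t.val := by
  rw [val_add, ← pow_eq_pow_mod _ hx, pow_add]

lemma star_pow_val [NeZero p] [StarMul G] (hxu : x ∈ unitary G) (hx : x ^ p = 1) (t : ZMod p) :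
    star x ^ t.val = x ^ (-t).val := by
  have hinv : x ^ t.val * x ^ (-t).val = 1 := by
    rw [← pow_val_add hx, add_neg_cancel, val_zero, pow_zero]
  calc star x ^ t.val = star x ^ t.val * (x ^ t.val * x ^ (-t).val) := by rw [hinv, mul_one]
    _ = x ^ (-t).val := by
      rw [← mul_assoc, ← star_pow, Unitary.star_mul_self_of_mem (pow_mem hxu _), one_mul]

end Powers

section Commutation

variable {𝕜 E : Type*} [CommSemiring 𝕜] [Semiring E] [Algebra 𝕜 E] {X Y : E} {c : 𝕜}

lemma mul_pow_eq_smul_pow_mul (h : X * Y = c • (Y * X)) (n : ℕ) :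
    X * Y ^ n = c ^ n • (Y ^ n * X) := by
  induction n with
  | zero => simp
  | succ n ih =>
    rw [pow_succ, ← mul_assoc, ih, smul_mul_assoc, mul_assoc, h, mul_smul_comm, smul_smul,
      ← pow_succ, mul_assoc]

lemma pow_mul_pow_eq_smul_pow_mul_pow (h : X * Y = c • (Y * X)) (m n : ℕ) :
    X ^ m * Y ^ n = c ^ (m * n) • (Y ^ n * X ^ m) := by
  induction m with
  | zero => simp
  | succ m ih =>
    rw [pow_succ, mul_assoc, mul_pow_eq_smul_pow_mul h n, mul_smul_comm, ← mul_assoc, ih,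
      smul_mul_assoc, smul_smul, ← pow_add, mul_assoc, ← pow_succ, add_one_mul, add_comm]

end Commutation

section Weyl

variable {p : ℕ} [NeZero p] {E : Type*} [Semiring E] [Algebra ℂ E] {X Y : E} {γ : ZMod p}

lemma pow_val_mul_pow_val (h : X * Y = 𝕖 γ • (Y * X)) (s t : ZMod p) :
    X ^ s.val * Y ^ t.val = 𝕖 (γ * s * t) • (Y ^ t.val * X ^ s.val) := by
  rw [pow_mul_pow_eq_smul_pow_mul_pow h, ← AddChar.map_nsmul_eq_pow, nsmul_eq_mul]
  push_cast [natCast_zmod_val]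
  ring_nf

lemma pow_val_mul_eq_smul (h : X * Y = 𝕖 γ • (Y * X)) (s : ZMod p) :
    X ^ s.val * Y = 𝕖 (γ * s) • (Y * X ^ s.val) := by
  have h1 := pow_mul_pow_eq_smul_pow_mul_pow h s.val 1
  rw [mul_one, ← AddChar.map_nsmul_eq_pow, nsmul_eq_mul, natCast_zmod_val, mul_comm] at h1
  simpa only [pow_one] using h1

end Weyl

lemma sum_sum_stdAddChar_smul {p : ℕ} [Fact p.Prime] {E : Type*} [AddCommMonoid E] [Module ℂ E]
    {φ : ZMod p} (hφ : φ ≠ 0) (u : ZMod p) (c : ZMod p → ZMod p) (g : ZMod p → E) :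
    ∑ l, ∑ x, 𝕖 (c l + x * (u - φ * l)) • g l = ((p : ℂ) * 𝕖 (c (φ⁻¹ * u))) • g (φ⁻¹ * u) := by
  have hdelta : ∀ l, u - φ * l = 0 ↔ φ⁻¹ * u = l := fun l => by
    rw [sub_eq_zero, inv_mul_eq_iff_eq_mul₀ hφ]
  have inner : ∀ l, ∑ x, 𝕖 (c l + x * (u - φ * l)) • g l
      = if φ⁻¹ * u = l then ((p : ℂ) * 𝕖 (c l)) • g l else 0 := fun l => by
    simp only [← sum_smul, AddChar.map_add_eq_mul, ← mul_sum,
      AddChar.sum_mulShift _ (isPrimitive_stdAddChar p), hdelta, ZMod.card]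
    split_ifs <;> simp [mul_comm]
  simp only [inner, sum_ite_eq, mem_univ, if_true]

section Conjugation

variable {p : ℕ} {E : Type*} [Ring E] [Algebra ℂ E] {M A R : E} {φ α β : ZMod p}

lemma pow_val_mul_mul_mul_eq_smul [NeZero p] (hMp : M ^ p = 1) (hAp : A ^ p = 1)
    (hMA : M * A = 𝕖 φ • (A * M)) (hMR : M * R = 𝕖 α • (R * M)) (hAR : A * R = 𝕖 β • (R * A))
    (x y : ZMod p) :
    M ^ x.val * A ^ (-(x + 1)).val * R * (A ^ (y + 1).val * M ^ (-y).val)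
      = 𝕖 (x * (α - β) - β + φ * x * (y - x)) • (R * (A ^ (y - x).val * M ^ (x - y).val)) := by
  have hA : A ^ (-(x + 1)).val * A ^ (y + 1).val = A ^ (y - x).val := by
    rw [← pow_val_add hAp]; ring_nf
  have hM : M ^ x.val * M ^ (-y).val = M ^ (x - y).val := by
    rw [← pow_val_add hMp]; ring_nf
  calc M ^ x.val * A ^ (-(x + 1)).val * R * (A ^ (y + 1).val * M ^ (-y).val)
      = M ^ x.val * ((A ^ (-(x + 1)).val * R) * A ^ (y + 1).val) * M ^ (-y).val := by
        simp only [mul_assoc]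
    _ = 𝕖 (β * -(x + 1)) • (M ^ x.val * R * A ^ (y - x).val * M ^ (-y).val) := by
        rw [pow_val_mul_eq_smul hAR, smul_mul_assoc, mul_assoc R, hA]
        simp only [mul_smul_comm, smul_mul_assoc, mul_assoc]
    _ = 𝕖 (β * -(x + 1)) • 𝕖 (α * x) • (R * (M ^ x.val * A ^ (y - x).val) * M ^ (-y).val) := by
        rw [pow_val_mul_eq_smul hMR]
        simp only [smul_mul_assoc, mul_assoc]
    _ = 𝕖 (β * -(x + 1)) • 𝕖 (α * x) • 𝕖 (φ * x * (y - x)) •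
          (R * (A ^ (y - x).val * M ^ (x - y).val)) := by
        rw [pow_val_mul_pow_val hMA, ← hM]
        simp only [mul_smul_comm, smul_mul_assoc, mul_assoc]
    _ = _ := by
        simp only [smul_smul, ← AddChar.map_add_eq_mul]
        ring_nf

lemma sum_smul_mul_mul_sum_smul [Fact p.Prime] (hφ : φ ≠ 0) (hMp : M ^ p = 1) (hAp : A ^ p = 1)
    (hMA : M * A = 𝕖 φ • (A * M)) (hMR : M * R = 𝕖 α • (R * M)) (hAR : A * R = 𝕖 β • (R * A))
    (σ a : ZMod p) :
    (∑ x, 𝕖 (-x * (σ - a)) • (M ^ x.val * A ^ (-(x + 1)).val)) * R *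
        (∑ y, 𝕖 (y * (σ - a)) • (A ^ (y + 1).val * M ^ (-y).val))
      = ((p : ℂ) * 𝕖 (φ⁻¹ * (α - β) * (a - σ) - β)) •
          (R * (A ^ (-(φ⁻¹ * (α - β))).val * M ^ (φ⁻¹ * (α - β)).val)) := by
  let g : ZMod p → E := fun l => R * (A ^ (-l).val * M ^ l.val)
  calc _ = ∑ x, ∑ y, 𝕖 (-x * (σ - a) + y * (σ - a) + (x * (α - β) - β + φ * x * (y - x))) •
          g (x - y) := by
        rw [sum_mul, sum_mul]
        simp only [mul_sum]
        refine sum_congr rfl fun x _ => sum_congr rfl fun y _ => ?_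
        rw [smul_mul_assoc, smul_mul_assoc, mul_smul_comm,
          pow_val_mul_mul_mul_eq_smul hMp hAp hMA hMR hAR, smul_smul, smul_smul,
          ← AddChar.map_add_eq_mul, ← AddChar.map_add_eq_mul]
        simp only [g, neg_sub]
    _ = ∑ x, ∑ l, 𝕖 ((l * (a - σ) - β) + x * ((α - β) - φ * l)) • g l := by
        refine sum_congr rfl fun x _ => ?_
        rw [← (Equiv.subLeft x).sum_comp]
        refine sum_congr rfl fun l _ => ?_
        simp only [Equiv.subLeft_apply, sub_sub_cancel]
        ring_nf
    _ = _ := by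
        rw [sum_comm, sum_sum_stdAddChar_smul hφ]

end Conjugation

section Vop

variable {p d : ℕ} [NeZero p] {M A : Matrix (Fin d) (Fin d) ℂ}

lemma Vop_eq_sum (hMp : M ^ p = 1) (hA : A ∈ unitaryGroup (Fin d) ℂ) (hAp : A ^ p = 1)
    (σ a : ZMod p) :
    Vop p d M A σ a = (𝕖 a / (Real.sqrt p : ℂ)) •
      ∑ x : ZMod p, 𝕖 (-x * (σ - a)) • (M ^ x.val * A ^ (-(x + 1)).val) := by
  have hAp' : star A ^ p = 1 := by rw [← star_pow, hAp, star_one]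
  rw [Vop, omega_pow_val, ← sum_range_natCast_eq_sum_zmod]
  refine congrArg _ (sum_congr rfl fun k _ => ?_)
  rw [omega_pow_val, pow_natCast_val hMp, ← pow_natCast_val hAp' (k + 1), star_pow_val hA hAp,
    Nat.cast_succ]

lemma star_Vop_eq_sum (hM : M ∈ unitaryGroup (Fin d) ℂ) (hMp : M ^ p = 1)
    (hA : A ∈ unitaryGroup (Fin d) ℂ) (hAp : A ^ p = 1) (σ a : ZMod p) :
    star (Vop p d M A σ a) = (𝕖 (-a) / (Real.sqrt p : ℂ)) •
      ∑ y : ZMod p, 𝕖 (y * (σ - a)) • (A ^ (y + 1).val * M ^ (-y).val) := by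
  rw [Vop_eq_sum hMp hA hAp, star_smul, star_sum, star_div₀, Complex.star_def,
    Complex.conj_ofReal, ← AddChar.map_neg_eq_conj]
  refine congrArg _ (sum_congr rfl fun x _ => ?_)
  rw [star_smul, star_mul, star_pow, star_pow, star_pow_val hA hAp, star_pow_val hM hMp,
    neg_neg, Complex.star_def, ← AddChar.map_neg_eq_conj, neg_mul, neg_neg]

end Vop

theorem stmt7_general (p d : ℕ) [Fact p.Prime]
    (M A R : Matrix (Fin d) (Fin d) ℂ)
    (hM : M ∈ Matrix.unitaryGroup (Fin d) ℂ)
    (hA : A ∈ Matrix.unitaryGroup (Fin d) ℂ)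
    (hMp : M ^ p = 1) (hAp : A ^ p = 1)
    (φ α β : ZMod p) (hφ : φ ≠ 0)
    (hMA : M * A = omega p ^ φ.val • (A * M))
    (hMR : M * R = omega p ^ α.val • (R * M))
    (hAR : A * R = omega p ^ β.val • (R * A))
    (σ a : ZMod p) :
    Vop p d M A σ a * R * star (Vop p d M A σ a) =
      omega p ^ ((φ⁻¹ * (α - β) * (a - σ) - β : ZMod p)).val •
        (R * (star A) ^ ((φ⁻¹ * (α - β) : ZMod p)).val *
          M ^ ((φ⁻¹ * (α - β) : ZMod p)).val) := by
  rw [omega_pow_val] at hMA hMR hAR ⊢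
  have hnorm : 𝕖 a / (Real.sqrt p : ℂ) * (𝕖 (-a) / (Real.sqrt p : ℂ)) = (p : ℂ)⁻¹ := by
    rw [div_mul_div_comm, ← AddChar.map_add_eq_mul, add_neg_cancel, AddChar.map_zero_eq_one,
      ← Complex.ofReal_mul, Real.mul_self_sqrt (Nat.cast_nonneg p), Complex.ofReal_natCast,
      one_div]
  rw [star_Vop_eq_sum hM hMp hA hAp, Vop_eq_sum hMp hA hAp, smul_mul_assoc, smul_mul_assoc,
    mul_smul_comm, smul_smul, hnorm, sum_smul_mul_mul_sum_smul hφ hMp hAp hMA hMR hAR]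
  rw [smul_smul, inv_mul_cancel_left₀ (NeZero.ne _), star_pow_val hA hAp, mul_assoc R]

/-- `V R V† = ω^{φ⁻¹(α−β)(a−σ) − β} · R · A^{−φ⁻¹(α−β)} · M^{φ⁻¹(α−β)}`,
so `V` maps Pauli operators to Pauli operators up to a `p`-th root of unity phase. -/
theorem stmt7 (p d : ℕ) [Fact p.Prime] (hodd : Odd p)
    (M A R : Matrix (Fin d) (Fin d) ℂ)
    (hM : M ∈ Matrix.unitaryGroup (Fin d) ℂ)
    (hA : A ∈ Matrix.unitaryGroup (Fin d) ℂ)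
    (hR : R ∈ Matrix.unitaryGroup (Fin d) ℂ)
    (hMp : M ^ p = 1) (hAp : A ^ p = 1) (hRp : R ^ p = 1)
    (φ α β : ZMod p) (hφ : φ ≠ 0)
    (hMA : M * A = omega p ^ φ.val • (A * M))
    (hMR : M * R = omega p ^ α.val • (R * M))
    (hAR : A * R = omega p ^ β.val • (R * A))
    (σ a : ZMod p) :
    Vop p d M A σ a * R * star (Vop p d M A σ a) =
      omega p ^ ((φ⁻¹ * (α - β) * (a - σ) - β : ZMod p)).val •
        (R * (star A) ^ ((φ⁻¹ * (α - β) : ZMod p)).val *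
          M ^ ((φ⁻¹ * (α - β) : ZMod p)).val) :=
  stmt7_general p d M A R hM hA hMp hAp φ α β hφ hMA hMR hAR σ a
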